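/- SEP₁ ≡_W (ρ→ρ_10): the restricted separation problem SEP₁ is continuously Weihrauch equivalent to the problem of translating the Cauchy representation of the reals into the decimal representation. -/

import Mathlib

open Filter Topology

abbrev Baire : Type := ℕ → ℕ

/-- The pairing `⟨p,q⟩(2n) = p(n)`, `⟨p,q⟩(2n+1) = q(n)`. -/
def pairB (p q : Baire) : Baire := fun n => if n % 2 = 0 then p (n / 2) else q (n / 2)

/-- A problem: a partial multivalued function on Baire space. -/
structure Problem where
  dom : Set Baire
  sol : Baire → Set Baire

/-- Continuous Weihrauch reducibility. -/
def WRed (f g : Problem) : Prop :=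
  ∃ (Kd Hd : Set Baire) (K H : Baire → Baire),
    ContinuousOn K Kd ∧ ContinuousOn H Hd ∧
      ∀ p ∈ f.dom, p ∈ Kd ∧ K p ∈ g.dom ∧
        ∀ q ∈ g.sol (K p), pairB p q ∈ Hd ∧ H (pairB p q) ∈ f.sol p

/-- Strong continuous Weihrauch reducibility. -/
def SWRed (f g : Problem) : Prop :=
  ∃ (Kd Hd : Set Baire) (K H : Baire → Baire),
    ContinuousOn K Kd ∧ ContinuousOn H Hd ∧
      ∀ p ∈ f.dom, p ∈ Kd ∧ K p ∈ g.dom ∧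
        ∀ q ∈ g.sol (K p), q ∈ Hd ∧ H q ∈ f.sol p

def WEquiv (f g : Problem) : Prop := WRed f g ∧ WRed g f
def SWEquiv (f g : Problem) : Prop := SWRed f g ∧ SWRed g f
def WLt (f g : Problem) : Prop := WRed f g ∧ ¬ WRed g f

/-- `range(p-1)`. -/
def rangeM (p : Baire) : Set ℕ := {n | ∃ i, p i = n + 1}

/-- Characteristic function of a set of naturals. -/
noncomputable def chi (A : Set ℕ) : Baire := A.indicator fun _ => 1

noncomputable def EC : Problem where
  dom := Set.univ
  sol := fun p => {chi (rangeM p)}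

noncomputable def EC1 : Problem where
  dom := {p | ((rangeM p)ᶜ).encard ≤ 1}
  sol := fun p => {chi (rangeM p)}

def pfst (r : Baire) : Baire := fun n => r (2 * n)
def psnd (r : Baire) : Baire := fun n => r (2 * n + 1)

noncomputable def SEP : Problem where
  dom := {r | rangeM (pfst r) ∩ rangeM (psnd r) = ∅}
  sol := fun r =>
    {s | ∃ A : Set ℕ, s = chi A ∧ rangeM (pfst r) ⊆ A ∧ A ⊆ (rangeM (psnd r))ᶜ}

noncomputable def SEP1 : Problem where
  dom := {r | rangeM (pfst r) ∩ rangeM (psnd r) = ∅ ∧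
    ((rangeM (pfst r) ∪ rangeM (psnd r))ᶜ).encard ≤ 1}
  sol := SEP.sol

/- rationals -/
def ratEnum (i : ℕ) : ℚ :=
  ((i.unpair.1 : ℚ) - (i.unpair.2.unpair.1 : ℚ)) / ((i.unpair.2.unpair.2 : ℚ) + 1)

def rhoCauchy (p : Baire) (x : ℝ) : Prop :=
  ∀ n, |(ratEnum (p n) : ℝ) - x| ≤ (2 : ℝ) ^ (-(n : ℤ))

def rhoNaive (p : Baire) (x : ℝ) : Prop :=
  Tendsto (fun n => ((ratEnum (p n) : ℝ))) atTop (nhds x)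

def rhoLt (p : Baire) (x : ℝ) : Prop := rangeM p = {n | (ratEnum n : ℝ) < x}
def rhoGt (p : Baire) (x : ℝ) : Prop := rangeM p = {n | x < (ratEnum n : ℝ)}

def rhoCfLt (p : Baire) (x : ℝ) : Prop :=
  (∀ n, p n ≤ 1) ∧ ∀ n, (p n = 1 ↔ (ratEnum n : ℝ) < x)
def rhoCfGt (p : Baire) (x : ℝ) : Prop :=
  (∀ n, p n ≤ 1) ∧ ∀ n, (p n = 1 ↔ x < (ratEnum n : ℝ))

noncomputable def cfTail : List ℕ → ℝ
  | [] => 0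
  | b :: l => 1 / ((b : ℝ) + cfTail l)

noncomputable def cfApprox (p : Baire) (k : ℕ) : ℝ :=
  ((Denumerable.ofNat ℤ (p 0) : ℤ) : ℝ) + cfTail ((List.range k).map fun i => p (i + 1))

def rhoCf (p : Baire) (x : ℝ) : Prop :=
  ((∀ i, 1 ≤ i → 1 ≤ p i) ∧ Tendsto (cfApprox p) atTop (nhds x)) ∨
    (∃ k, 1 ≤ k ∧ p k = 0 ∧ (∀ i, 1 ≤ i → i < k → 1 ≤ p i) ∧
      (2 ≤ k → 2 ≤ p (k - 1)) ∧ x = cfApprox p (k - 1))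

def rhoDec (p : Baire) (x : ℝ) : Prop :=
  (∀ n, 1 ≤ n → p n ≤ 9) ∧
    x = ((Denumerable.ofNat ℤ (p 0) : ℤ) : ℝ) + ∑' n : ℕ, (p (n + 1) : ℝ) / 10 ^ (n + 1)

/-- The implication problem between two representations of ℝ. -/
def implProblem (d1 d2 : Baire → ℝ → Prop) : Problem where
  dom := {p | ∃ x, d1 p x}
  sol := fun p => {q | ∃ x, d1 p x ∧ d2 q x}

/- trees / WKL / choice on Cantor space -/
def wordCode : List Bool → ℕ
  | [] => 0
  | b :: w => 2 * wordCode w + (if b then 2 else 1)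

def prefixList (x : Baire) (k : ℕ) : List Bool := (List.range k).map fun i => decide (x i = 1)

def isTreeCode (t : Baire) : Prop :=
  (∀ n, t n ≤ 1) ∧
    ∀ w v : List Bool, w <+: v → t (wordCode v) = 1 → t (wordCode w) = 1

def WKL : Problem where
  dom := {t | isTreeCode t ∧ {w : List Bool | t (wordCode w) = 1}.Infinite}
  sol := fun t => {x | (∀ n, x n ≤ 1) ∧ ∀ k, t (wordCode (prefixList x k)) = 1}

def Ap (p : Baire) : Set Baire :=
  {x | (∀ n, x n ≤ 1) ∧ ∀ k, wordCode (prefixList x k) ∉ rangeM p}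

def CCantor : Problem where
  dom := {p | (Ap p).Nonempty}
  sol := Ap

def Cle2 : Problem where
  dom := {p | (Ap p).Nonempty ∧ (Ap p).encard ≤ 2}
  sol := Ap

/- limit and parallelization -/
def projCount (r : Baire) (n : ℕ) : Baire := fun k => r (Nat.pair n k)

def limP : Problem where
  dom := {r | ∃ q : Baire, ∀ k, Tendsto (fun n => projCount r n k) atTop (nhds (q k))}
  sol := fun r => {q | ∀ k, Tendsto (fun n => projCount r n k) atTop (nhds (q k))}

def parallel (f : Problem) : Problem where
  dom := {r | ∀ n, projCount r n ∈ f.dom}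
  sol := fun r => {s | ∀ n, projCount s n ∈ f.sol (projCount r n)}

def MCT : Problem where
  dom := {r | ∃ xs : ℕ → ℝ, (∀ n, rhoCauchy (projCount r n) (xs n)) ∧
    Monotone xs ∧ BddAbove (Set.range xs)}
  sol := fun r => {q | ∃ xs : ℕ → ℝ, (∀ n, rhoCauchy (projCount r n) (xs n)) ∧
    Monotone xs ∧ BddAbove (Set.range xs) ∧ rhoCauchy q (⨆ n, xs n)}

/- SORT and RAT -/
open Classical in
noncomputable def sortOut (p : Baire) : Baire := fun k =>
  if {i | p i = 0}.Infinite then 0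
  else if k < {i | p i = 0}.ncard then 0 else 1

noncomputable def SORT : Problem where
  dom := {p | ∀ n, p n ≤ 1}
  sol := fun p => {sortOut p}

def znk (n : ℕ) : Baire := fun k => if k < n then 0 else 1

def RAT : Problem where
  dom := {p | ∃ x, rhoCauchy p x}
  sol := fun p => {s | ∃ x, rhoCauchy p x ∧
    ((∃ n, x = (ratEnum n : ℝ) ∧ s = znk n) ∨
      ((∀ r : ℚ, x ≠ (r : ℝ)) ∧ s = fun _ => 0))}

/- omniscience principles -/
def projFin (m i : ℕ) (r : Baire) : Baire := fun k => r (m * k + i - 1)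
def isZeroSeq (p : Baire) : Prop := ∀ k, p k = 0
def constSeq (i : ℕ) : Baire := fun _ => i

noncomputable def LPOn (n : ℕ) : Problem where
  dom := Set.univ
  sol := fun r => {constSeq ({i | 1 ≤ i ∧ i ≤ n ∧ isZeroSeq (projFin n i r)}.ncard)}

def LLPOn (n : ℕ) : Problem where
  dom := {r | {i | 1 ≤ i ∧ i ≤ n ∧ ¬ isZeroSeq (projFin n i r)}.encard ≤ 1}
  sol := fun r => {s | ∃ i, 1 ≤ i ∧ i ≤ n ∧ isZeroSeq (projFin n i r) ∧ s = constSeq i}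

def MLPOn (n : ℕ) : Problem where
  dom := {r | ∃ i, 1 ≤ i ∧ i ≤ n ∧ isZeroSeq (projFin n i r)}
  sol := fun r => {s | ∃ i, 1 ≤ i ∧ i ≤ n ∧ isZeroSeq (projFin n i r) ∧ s = constSeq i}

def LPO : Problem where
  dom := Set.univ
  sol := fun p => {s | (isZeroSeq p ∧ s = constSeq 1) ∨ (¬ isZeroSeq p ∧ s = constSeq 0)}

/- choice problems on ℕ etc. -/
def Cfin (n : ℕ) : Problem where
  dom := {p | ∃ i, i < n ∧ i ∉ rangeM p}
  sol := fun p => {s | ∃ i, i < n ∧ i ∉ rangeM p ∧ s = constSeq i}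

def ACCfin (n : ℕ) : Problem where
  dom := {p | (∃ i, i < n ∧ i ∉ rangeM p) ∧ ({i | i < n} ∩ rangeM p).encard ≤ 1}
  sol := (Cfin n).sol

def CNat : Problem where
  dom := {p | ∃ i, i ∉ rangeM p}
  sol := fun p => {s | ∃ i, i ∉ rangeM p ∧ s = constSeq i}

/- differentiation -/
instance : Countable (AddMonoidAlgebra ℚ ℕ) :=
  AddMonoidAlgebra.coeff_injective.countable

instance : Countable (Polynomial ℚ) :=
  Polynomial.toFinsupp_injective.countable

noncomputable def polyEnum : ℕ → Polynomial ℚ :=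
  (exists_surjective_nat (Polynomial ℚ)).choose

noncomputable def polyFun (k : ℕ) : C(Set.Icc (0:ℝ) 1, ℝ) :=
  ⟨fun x => ((polyEnum k).map (algebraMap ℚ ℝ)).eval (x : ℝ),
   (((polyEnum k).map (algebraMap ℚ ℝ)).continuous).comp continuous_subtype_val⟩

noncomputable def deltaC (p : Baire) (f : C(Set.Icc (0:ℝ) 1, ℝ)) : Prop :=
  ∀ n, ‖f - polyFun (p n)‖ ≤ (2 : ℝ) ^ (-(n : ℤ))

def IsDerivOn (f g : C(Set.Icc (0:ℝ) 1, ℝ)) : Prop :=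
  ∀ x : Set.Icc (0:ℝ) 1,
    HasDerivWithinAt (Set.IccExtend (by norm_num : (0:ℝ) ≤ 1) f) (g x) (Set.Icc 0 1) (x : ℝ)

noncomputable def diffP : Problem where
  dom := {p | ∃ f g, deltaC p f ∧ IsDerivOn f g}
  sol := fun p => {q | ∃ f g, deltaC p f ∧ IsDerivOn f g ∧ deltaC q g}

/-!
SEP₁ ≤ (ρ→ρ₁₀): from enumerations `p`, `q` of disjoint sets, build the real number
`x = ∑ₖ dₖ 10^-(k+1)`, where `dₖ = ±1` if at stage `k` the least number not yet enumerated is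
enumerated by `p` (resp. `q`), and `dₖ = 0` otherwise. Once `n` is the least unsettled number at
stage `j`, the partial sums stay constant until the stage `w` at which `n` is enumerated, and then
move by `±10^-(w+1)`, which the tail cannot undo; so `x` lies strictly above or below the `j`-th
partial sum according to the side `n` goes to, and the `j`-digit truncation of any decimal name
of `x` reveals that side. A number that is never enumerated is the unique gap, where any answer is
allowed.

(ρ→ρ₁₀) ≤ SEP₁: from a Cauchy name of `x`, enumerate all rational codes below `x` (and all
non-canonical codes) on one side and the canonical codes above `x` on the other; at most the
canonical code of `x` is left out. A separator decides for each decimal fraction `k / 10^j` near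
`x` on which side of it `x` lies. This yields `⌊x 10^j⌋`, or `⌈x 10^j⌉ - 1` when `x` is a decimal
fraction whose code the separator rejects; since that answer does not depend on `j`, the digits
form one of the two decimal expansions of `x`.
-/

open scoped Classical

@[simp] lemma pfst_pairB (p q : Baire) : pfst (pairB p q) = p := by
  funext n
  simp [pfst, pairB]

@[simp] lemma psnd_pairB (p q : Baire) : psnd (pairB p q) = q := by
  funext n
  simp [psnd, pairB, Nat.add_mod, Nat.add_div]

lemma eventually_forall_lt_eq (z : Baire) (N : ℕ) : ∀ᶠ z' in 𝓝 z, ∀ i < N, z' i = z i := by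
  have hcoord (i : ℕ) : ∀ᶠ z' in 𝓝 z, z' i = z i :=
    (continuous_apply i).continuousAt.eventually (isOpen_discrete {z i} |>.mem_nhds rfl)
  simpa only [Finset.mem_range] using (Filter.eventually_all_finset (Finset.range N)).mpr
    fun i _ => hcoord i

lemma continuousOn_of_finite_prefix {F : Baire → Baire} {S : Set Baire}
    (h : ∀ z ∈ S, ∀ n, ∃ N, ∀ z', (∀ i < N, z' i = z i) → F z' n = F z n) :
    ContinuousOn F S := by
  intro z hz
  refine continuousWithinAt_pi.mpr fun n => ?_
  obtain ⟨N, hN⟩ := h z hz n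
  exact tendsto_nhds_of_eventually_eq <|
    nhdsWithin_le_nhds ((eventually_forall_lt_eq z N).mono fun z' hz' => hN z' hz')

lemma chi_eq_one_iff {A : Set ℕ} {n : ℕ} : chi A n = 1 ↔ n ∈ A := by
  by_cases h : n ∈ A <;> simp [chi, h]

lemma eq_of_forall_abs_sub_le_mul_pow {u v C r : ℝ} (hr0 : 0 ≤ r) (hr1 : r < 1)
    (h : ∀ n, |u - v| ≤ C * r ^ n) : u = v := by
  have hlim : Tendsto (fun n => C * r ^ n) atTop (𝓝 0) := by
    simpa using (tendsto_pow_atTop_nhds_zero_of_lt_one hr0 hr1).const_mul C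
  exact eq_of_abs_sub_nonpos (ge_of_tendsto' hlim h)

section Decimal

variable (a : ℤ) (d : ℕ → ℤ)

def decNum : ℕ → ℤ
  | 0 => a
  | k + 1 => 10 * decNum k + d k

noncomputable def decSum : ℝ := a + ∑' k, (d k : ℝ) / 10 ^ (k + 1)

lemma decNum_succ_div_pow (K : ℕ) :
    (decNum a d (K + 1) : ℝ) / 10 ^ (K + 1) = decNum a d K / 10 ^ K + d K / 10 ^ (K + 1) := by
  simp only [decNum]
  push_cast
  field_simp
  ring

lemma decNum_div_pow_eq_add_sum (K : ℕ) :
    (decNum a d K : ℝ) / 10 ^ K = a + ∑ k ∈ Finset.range K, (d k : ℝ) / 10 ^ (k + 1) := by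
  induction K with
  | zero => simp [decNum]
  | succ K ih => rw [decNum_succ_div_pow, ih, Finset.sum_range_succ, add_assoc]

variable {a d}

lemma decNum_congr {d' : ℕ → ℤ} {K : ℕ} (h : ∀ k < K, d' k = d k) :
    decNum a d' K = decNum a d K := by
  induction K with
  | zero => rfl
  | succ K ih => simp only [decNum, h K K.lt_succ_self, ih fun k hk => h k (by omega)]

lemma decNum_div_pow_eq_of_forall_eq_zero {j w : ℕ} (hjw : j ≤ w)
    (hzero : ∀ k, j ≤ k → k < w → d k = 0) :
    (decNum a d w : ℝ) / 10 ^ w = decNum a d j / 10 ^ j := by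
  induction w, hjw using Nat.le_induction with
  | base => rfl
  | succ w hjw ih =>
    rw [decNum_succ_div_pow, hzero w hjw w.lt_succ_self,
      ih fun k hjk hkw => hzero k hjk (by omega)]
    simp

lemma hasSum_const_div_pow (c : ℝ) (K : ℕ) :
    HasSum (fun k => c / 10 ^ (k + K + 1)) (c / (9 * 10 ^ K)) := by
  have hgeom := (hasSum_geometric_of_lt_one (r := (1 / 10 : ℝ)) (by norm_num) (by norm_num))
    |>.mul_left (c / 10 ^ (K + 1))
  have hterm : (fun k => c / 10 ^ (k + K + 1)) = fun k => c / 10 ^ (K + 1) * (1 / 10) ^ k := by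
    funext k
    rw [one_div_pow, pow_add, pow_add]
    field_simp
    ring
  have hval : c / (9 * 10 ^ K) = c / 10 ^ (K + 1) * (1 - 1 / 10)⁻¹ := by
    rw [pow_succ]
    field_simp
    norm_num
  rwa [hterm, hval]

lemma decSum_sub_decNum_div_pow_mem_Icc {lo hi : ℝ} (hlo : ∀ k, lo ≤ d k)
    (hhi : ∀ k, (d k : ℝ) ≤ hi) (K : ℕ) :
    decSum a d - decNum a d K / 10 ^ K ∈ Set.Icc (lo / (9 * 10 ^ K)) (hi / (9 * 10 ^ K)) := by
  have hsum : Summable fun k => (d k : ℝ) / 10 ^ (k + 1) := by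
    refine .of_norm_bounded (hasSum_const_div_pow (|lo| + |hi|) 0).summable fun k => ?_
    rw [Real.norm_eq_abs, abs_div, abs_of_pos (by positivity : (0 : ℝ) < 10 ^ (k + 1)), add_zero]
    refine div_le_div_of_nonneg_right ?_ (by positivity)
    exact (abs_le_max_abs_abs (hlo k) (hhi k)).trans (max_le_add_of_nonneg (abs_nonneg _)
      (abs_nonneg _))
  have htail : decSum a d - decNum a d K / 10 ^ K = ∑' k, (d (k + K) : ℝ) / 10 ^ (k + K + 1) := by
    rw [decSum, decNum_div_pow_eq_add_sum, ← hsum.sum_add_tsum_nat_add K]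
    ring
  have htail_sum := ((summable_nat_add_iff K).mpr hsum).hasSum
  rw [htail]
  exact ⟨hasSum_le (fun k => by gcongr; exact hlo _) (hasSum_const_div_pow lo K) htail_sum,
    hasSum_le (fun k => by gcongr; exact hhi _) htail_sum (hasSum_const_div_pow hi K)⟩

lemma abs_decSum_sub_decNum_div_pow_le (hd : ∀ k, |d k| ≤ 1) (K : ℕ) :
    |decSum a d - decNum a d K / 10 ^ K| ≤ 1 / (9 * 10 ^ K) := by
  have h := decSum_sub_decNum_div_pow_mem_Icc (a := a) (lo := -1) (hi := 1)
    (fun k => by exact_mod_cast (abs_le.mp (hd k)).1)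
    (fun k => by exact_mod_cast (abs_le.mp (hd k)).2) K
  rw [abs_le]
  exact ⟨by simpa [neg_div] using h.1, h.2⟩

lemma abs_decSum_sub_decNum_div_pow_sub_le (hd : ∀ k, |d k| ≤ 1) {j w : ℕ} (hjw : j ≤ w)
    (hzero : ∀ k, j ≤ k → k < w → d k = 0) :
    |decSum a d - decNum a d j / 10 ^ j - d w / 10 ^ (w + 1)| ≤ 1 / (9 * 10 ^ (w + 1)) := by
  have h := abs_decSum_sub_decNum_div_pow_le (a := a) hd (w + 1)
  rwa [decNum_succ_div_pow, decNum_div_pow_eq_of_forall_eq_zero hjw hzero, ← sub_sub] at h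

lemma decNum_div_pow_lt_decSum (hd : ∀ k, |d k| ≤ 1) {j w : ℕ} (hjw : j ≤ w)
    (hzero : ∀ k, j ≤ k → k < w → d k = 0) (hw : d w = 1) :
    (decNum a d j : ℝ) / 10 ^ j < decSum a d := by
  have h := (abs_le.mp (abs_decSum_sub_decNum_div_pow_sub_le (a := a) hd hjw hzero)).1
  rw [hw, Int.cast_one, show (1 : ℝ) / (9 * 10 ^ (w + 1)) = 1 / 10 ^ (w + 1) / 9 by ring] at h
  linarith [show (0 : ℝ) < 1 / 10 ^ (w + 1) by positivity]

lemma decSum_lt_decNum_div_pow (hd : ∀ k, |d k| ≤ 1) {j w : ℕ} (hjw : j ≤ w)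
    (hzero : ∀ k, j ≤ k → k < w → d k = 0) (hw : d w = -1) :
    decSum a d < decNum a d j / 10 ^ j := by
  have h := (abs_le.mp (abs_decSum_sub_decNum_div_pow_sub_le (a := a) hd hjw hzero)).2
  rw [hw, Int.cast_neg, Int.cast_one, neg_div,
    show (1 : ℝ) / (9 * 10 ^ (w + 1)) = 1 / 10 ^ (w + 1) / 9 by ring] at h
  linarith [show (0 : ℝ) < 1 / 10 ^ (w + 1) by positivity]

end Decimal

lemma rhoDec_iff {y : Baire} {x : ℝ} :
    rhoDec y x ↔ (∀ n, 1 ≤ n → y n ≤ 9) ∧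
      x = decSum (Denumerable.ofNat ℤ (y 0)) fun k => y (k + 1) := by
  simp only [rhoDec, decSum, Int.cast_natCast]

noncomputable def decTrunc (y : Baire) : ℕ → ℤ :=
  decNum (Denumerable.ofNat ℤ (y 0)) fun k => y (k + 1)

lemma decTrunc_congr {y y' : Baire} {s : ℕ} (h : ∀ i ≤ s, y' i = y i) :
    decTrunc y' s = decTrunc y s := by
  rw [decTrunc, decTrunc, h 0 s.zero_le]
  exact decNum_congr fun k hk => by rw [h (k + 1) hk]

lemma rhoDec.decTrunc_le {y : Baire} {x : ℝ} (hy : rhoDec y x) (s : ℕ) :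
    (decTrunc y s : ℝ) ≤ x * 10 ^ s ∧ x * 10 ^ s ≤ decTrunc y s + 1 := by
  obtain ⟨hdig, hx⟩ := rhoDec_iff.mp hy
  have h := decSum_sub_decNum_div_pow_mem_Icc (a := Denumerable.ofNat ℤ (y 0))
    (d := fun k => (y (k + 1) : ℤ)) (lo := 0) (hi := 9) (fun k => by positivity)
    (fun k => by exact_mod_cast hdig (k + 1) (by omega)) s
  rw [← hx, ← decTrunc] at h
  have hpos : (0 : ℝ) < 10 ^ s := by positivity
  obtain ⟨h1, h2⟩ := h
  rw [zero_div, sub_nonneg, div_le_iff₀ hpos] at h1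
  rw [sub_le_iff_le_add, show (9 : ℝ) / (9 * 10 ^ s) = 1 / 10 ^ s by field_simp, ← add_div,
    le_div_iff₀ hpos] at h2
  exact ⟨h1, by linarith⟩

noncomputable def decimalName (t : ℕ → ℤ) : Baire :=
  fun j => if j = 0 then Encodable.encode (t 0) else (t j - 10 * t (j - 1)).toNat

lemma rhoDec_decimalName {t : ℕ → ℤ} {x : ℝ}
    (hdig : ∀ j, 0 ≤ t (j + 1) - 10 * t j ∧ t (j + 1) - 10 * t j ≤ 9)
    (hx : ∀ j, (t j : ℝ) ≤ x * 10 ^ j ∧ x * 10 ^ j ≤ t j + 1) :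
    rhoDec (decimalName t) x := by
  set d : ℕ → ℤ := fun k => t (k + 1) - 10 * t k
  have hname : (fun k => ((decimalName t (k + 1) : ℕ) : ℤ)) = d := by
    funext k
    simp [decimalName, Int.toNat_of_nonneg (hdig k).1, d]
  have hnum (K : ℕ) : decNum (t 0) d K = t K := by
    induction K with
    | zero => rfl
    | succ K ih => simp only [decNum, ih, d]; ring
  refine rhoDec_iff.mpr ⟨fun n hn => ?_, ?_⟩
  · obtain ⟨m, rfl⟩ : ∃ m, n = m + 1 := ⟨n - 1, by omega⟩
    simp only [decimalName, Nat.add_one_ne_zero, if_false, Nat.add_sub_cancel]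
    have := hdig m
    omega
  rw [hname, decimalName, if_pos rfl, Denumerable.ofNat_encode]
  refine eq_of_forall_abs_sub_le_mul_pow (C := 1) (r := 1 / 10) (by norm_num) (by norm_num)
    fun K => ?_
  have hsum := decSum_sub_decNum_div_pow_mem_Icc (a := t 0) (d := d) (lo := 0) (hi := 9)
    (fun k => by exact_mod_cast (hdig k).1) (fun k => by exact_mod_cast (hdig k).2) K
  rw [hnum] at hsum
  have hpos : (0 : ℝ) < 10 ^ K := by positivity
  have he : (9 : ℝ) / (9 * 10 ^ K) = (1 / 10) ^ K := by rw [one_div_pow]; field_simp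
  have hlo : (t K : ℝ) / 10 ^ K ≤ x := (div_le_iff₀ hpos).mpr (hx K).1
  have hhi : x ≤ (t K : ℝ) / 10 ^ K + (1 / 10) ^ K := by
    rw [one_div_pow, ← add_div, le_div_iff₀ hpos]
    exact (hx K).2
  rw [he, zero_div] at hsum
  rw [one_mul, abs_le]
  constructor <;> linarith [hsum.1, hsum.2]

lemma rhoDec_decimalName_floor (x : ℝ) : rhoDec (decimalName fun j => ⌊x * 10 ^ j⌋) x := by
  refine rhoDec_decimalName (fun j => ?_) fun j => ⟨Int.floor_le _, (Int.lt_floor_add_one _).le⟩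
  rw [show x * 10 ^ (j + 1) = 10 * (x * 10 ^ j) by ring]
  have h1 : 10 * ⌊x * 10 ^ j⌋ ≤ ⌊10 * (x * 10 ^ j)⌋ :=
    Int.le_floor.mpr (by push_cast; linarith [Int.floor_le (x * 10 ^ j)])
  have h2 : ⌊10 * (x * 10 ^ j)⌋ < 10 * ⌊x * 10 ^ j⌋ + 10 :=
    Int.floor_lt.mpr (by push_cast; linarith [Int.lt_floor_add_one (x * 10 ^ j)])
  omega

lemma rhoDec_decimalName_ceil_sub_one (x : ℝ) :
    rhoDec (decimalName fun j => ⌈x * 10 ^ j⌉ - 1) x := by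
  refine rhoDec_decimalName (fun j => ?_) fun j => ⟨?_, ?_⟩
  · rw [show x * 10 ^ (j + 1) = 10 * (x * 10 ^ j) by ring]
    have h1 : ⌈10 * (x * 10 ^ j)⌉ ≤ 10 * ⌈x * 10 ^ j⌉ :=
      Int.ceil_le.mpr (by push_cast; linarith [Int.le_ceil (x * 10 ^ j)])
    have h2 : 10 * ⌈x * 10 ^ j⌉ - 10 < ⌈10 * (x * 10 ^ j)⌉ :=
      Int.lt_ceil.mpr (by push_cast; linarith [Int.ceil_lt_add_one (x * 10 ^ j)])
    omega
  · push_cast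
    linarith [Int.ceil_lt_add_one (x * 10 ^ j)]
  · push_cast
    linarith [Int.le_ceil (x * 10 ^ j)]

lemma rhoCauchy.abs_ratEnum_sub_le {p : Baire} {x : ℝ} (h : rhoCauchy p x) (n : ℕ) :
    |(ratEnum (p n) : ℝ) - x| ≤ (2 ^ n)⁻¹ := by
  simpa only [zpow_neg, zpow_natCast] using h n

lemma rhoCauchy.unique {p : Baire} {x y : ℝ} (hx : rhoCauchy p x) (hy : rhoCauchy p y) : x = y :=
  eq_of_forall_abs_sub_le_mul_pow (C := 2) (r := 1 / 2) (by norm_num) (by norm_num) fun n => by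
    have h := _root_.abs_sub_le x (ratEnum (p n)) y
    rw [abs_sub_comm x (ratEnum (p n) : ℝ)] at h
    rw [one_div_pow, two_mul, ← inv_eq_one_div]
    linarith [hx.abs_ratEnum_sub_le n, hy.abs_ratEnum_sub_le n]

lemma exists_inv_two_pow_lt {ε : ℝ} (hε : 0 < ε) : ∃ m : ℕ, ((2 : ℝ) ^ m)⁻¹ < ε := by
  simpa only [inv_pow] using exists_pow_lt_of_lt_one hε (by norm_num : (2⁻¹ : ℝ) < 1)

lemma rhoCauchy.exists_lt_sub_iff {p : Baire} {x : ℝ} (h : rhoCauchy p x) (r : ℚ) :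
    (∃ m, r < ratEnum (p m) - ((2 : ℚ) ^ m)⁻¹) ↔ (r : ℝ) < x := by
  constructor
  · rintro ⟨m, hm⟩
    have hm' := (Rat.cast_lt (K := ℝ)).mpr hm
    push_cast at hm'
    linarith [(abs_le.mp (h.abs_ratEnum_sub_le m)).2]
  · intro hr
    obtain ⟨m, hm⟩ := exists_inv_two_pow_lt (half_pos (sub_pos.mpr hr))
    refine ⟨m, (Rat.cast_lt (K := ℝ)).mp ?_⟩
    push_cast
    linarith [(abs_le.mp (h.abs_ratEnum_sub_le m)).1]

lemma rhoCauchy.exists_add_lt_iff {p : Baire} {x : ℝ} (h : rhoCauchy p x) (r : ℚ) :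
    (∃ m, ratEnum (p m) + ((2 : ℚ) ^ m)⁻¹ < r) ↔ x < r := by
  constructor
  · rintro ⟨m, hm⟩
    have hm' := (Rat.cast_lt (K := ℝ)).mpr hm
    push_cast at hm'
    linarith [(abs_le.mp (h.abs_ratEnum_sub_le m)).1]
  · intro hr
    obtain ⟨m, hm⟩ := exists_inv_two_pow_lt (half_pos (sub_pos.mpr hr))
    refine ⟨m, (Rat.cast_lt (K := ℝ)).mp ?_⟩
    push_cast
    linarith [(abs_le.mp (h.abs_ratEnum_sub_le m)).2]

def ratCode (v : ℚ) : ℕ := Nat.pair v.num.toNat (Nat.pair (-v.num).toNat (v.den - 1))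

lemma ratEnum_ratCode (v : ℚ) : ratEnum (ratCode v) = v := by
  have hnum : ((v.num.toNat : ℕ) : ℚ) - (((-v.num).toNat : ℕ) : ℚ) = v.num := by
    exact_mod_cast (by omega : (v.num.toNat : ℤ) - ((-v.num).toNat : ℤ) = v.num)
  have hden : ((v.den - 1 : ℕ) : ℚ) + 1 = v.den := by
    exact_mod_cast Nat.succ_pred_eq_of_pos v.pos
  rw [ratEnum, ratCode, Nat.unpair_pair, Nat.unpair_pair, hnum, hden, Rat.num_div_den]

noncomputable def enumOf (P : ℕ → ℕ → Prop) : Baire :=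
  fun i => if P i.unpair.1 i.unpair.2 then i.unpair.1 + 1 else 0

lemma rangeM_enumOf (P : ℕ → ℕ → Prop) : rangeM (enumOf P) = {n | ∃ m, P n m} := by
  ext n
  constructor
  · rintro ⟨i, hi⟩
    unfold enumOf at hi
    split_ifs at hi with h
    · exact ⟨i.unpair.2, by rwa [← Nat.succ_inj.mp hi]⟩
  · rintro ⟨m, hm⟩
    exact ⟨Nat.pair n m, by simp [enumOf, hm]⟩

noncomputable def cutInstance (p : Baire) : Baire :=
  pairB (enumOf fun n m => n ∉ Set.range ratCode ∨ ratEnum n < ratEnum (p m) - ((2 : ℚ) ^ m)⁻¹)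
    (enumOf fun n m => n ∈ Set.range ratCode ∧ ratEnum (p m) + ((2 : ℚ) ^ m)⁻¹ < ratEnum n)

section CutInstance

variable {p : Baire} {x : ℝ}

lemma rangeM_pfst_cutInstance (hp : rhoCauchy p x) :
    rangeM (pfst (cutInstance p)) = {n | n ∉ Set.range ratCode ∨ (ratEnum n : ℝ) < x} := by
  simp only [cutInstance, pfst_pairB, rangeM_enumOf, exists_or, exists_const,
    hp.exists_lt_sub_iff]

lemma rangeM_psnd_cutInstance (hp : rhoCauchy p x) :
    rangeM (psnd (cutInstance p)) = {n | n ∈ Set.range ratCode ∧ x < ratEnum n} := by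
  simp only [cutInstance, psnd_pairB, rangeM_enumOf, exists_and_left, hp.exists_add_lt_iff]

lemma cutInstance_mem_dom (hp : rhoCauchy p x) : cutInstance p ∈ SEP1.dom := by
  rw [SEP1, Set.mem_ofPred_eq, rangeM_pfst_cutInstance hp, rangeM_psnd_cutInstance hp]
  constructor
  · ext n
    simp only [Set.mem_inter_iff, Set.mem_ofPred_eq, Set.mem_empty_iff_false, iff_false]
    rintro ⟨h | h, hcode, hx⟩
    · exact h hcode
    · linarith
  · refine Set.encard_le_one_iff.mpr fun m n hm hn => ?_
    simp only [Set.mem_compl_iff, Set.mem_union, Set.mem_ofPred_eq, not_or, not_lt, not_and,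
      not_not] at hm hn
    obtain ⟨⟨⟨v, rfl⟩, hvx⟩, hxv⟩ := hm
    obtain ⟨⟨⟨w, rfl⟩, hwx⟩, hxw⟩ := hn
    rw [ratEnum_ratCode] at hvx hxv hwx hxw
    have hv := le_antisymm (hxv ⟨v, rfl⟩) hvx
    have hw := le_antisymm (hxw ⟨w, rfl⟩) hwx
    rw [Rat.cast_injective (hv.trans hw.symm)]

lemma separator_cutInstance {s : Baire} (hp : rhoCauchy p x) (hs : s ∈ SEP.sol (cutInstance p)) :
    (∀ v : ℚ, s (ratCode v) = 1 → (v : ℝ) ≤ x) ∧ (∀ v : ℚ, s (ratCode v) ≠ 1 → x ≤ v) := by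
  obtain ⟨A, rfl, hleft, hright⟩ := hs
  rw [rangeM_pfst_cutInstance hp] at hleft
  rw [rangeM_psnd_cutInstance hp] at hright
  refine ⟨fun v hv => ?_, fun v hv => ?_⟩
  · have h := hright (chi_eq_one_iff.mp hv)
    simp only [Set.mem_compl_iff, Set.mem_ofPred_eq, not_and, not_lt, ratEnum_ratCode] at h
    exact h ⟨v, rfl⟩
  · have h : ratCode v ∉ {n | n ∉ Set.range ratCode ∨ (ratEnum n : ℝ) < x} :=
      fun h => hv (chi_eq_one_iff.mpr (hleft h))
    simp only [Set.mem_ofPred_eq, not_or, not_not, not_lt, ratEnum_ratCode] at h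
    exact h.2

end CutInstance

lemma continuousOn_cutInstance : ContinuousOn cutInstance Set.univ :=
  continuousOn_of_finite_prefix fun p _ n =>
    ⟨(n / 2).unpair.2 + 1, fun p' hp' => by
      have h := hp' _ (Nat.lt_succ_self _)
      simp only [cutInstance, pairB, enumOf, h]
      congr⟩

noncomputable def roundApprox (p : Baire) (j : ℕ) : ℤ := round (ratEnum (p (4 * (j + 1))) * 10 ^ j)

lemma rhoCauchy.abs_mul_pow_sub_roundApprox_lt {p : Baire} {x : ℝ} (hp : rhoCauchy p x) (j : ℕ) :
    |x * 10 ^ j - roundApprox p j| < 1 := by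
  set v := ratEnum (p (4 * (j + 1)))
  have hround : |(v : ℝ) * 10 ^ j - roundApprox p j| ≤ 1 / 2 := by
    have h := (Rat.cast_le (K := ℝ)).mpr (abs_sub_round (v * 10 ^ j))
    push_cast at h
    exact h
  have h10 : (10 : ℝ) ^ j ≤ 16 ^ j := pow_le_pow_left₀ (by norm_num) (by norm_num) j
  have happrox : |x * 10 ^ j - v * 10 ^ j| ≤ 1 / 16 := by
    rw [← sub_mul, abs_mul, abs_sub_comm, abs_of_pos (by positivity : (0 : ℝ) < 10 ^ j)]
    calc |(v : ℝ) - x| * 10 ^ j ≤ (2 ^ (4 * (j + 1)))⁻¹ * 16 ^ j :=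
          mul_le_mul (hp.abs_ratEnum_sub_le _) h10 (by positivity) (by positivity)
      _ = 1 / 16 := by rw [pow_mul, pow_succ]; norm_num
  calc |x * 10 ^ j - roundApprox p j|
      ≤ |x * 10 ^ j - v * 10 ^ j| + |(v : ℝ) * 10 ^ j - roundApprox p j| := abs_sub_le _ _ _
    _ < 1 := by linarith

noncomputable def sepTrunc (z : Baire) (j : ℕ) : ℤ :=
  if psnd z (ratCode (roundApprox (pfst z) j / 10 ^ j)) = 1 then roundApprox (pfst z) j
  else roundApprox (pfst z) j - 1

lemma sepTrunc_congr {z z' : Baire} {j : ℕ}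
    (h : ∀ i < 2 * (4 * (j + 1)) + 2 * ratCode (roundApprox (pfst z) j / 10 ^ j) + 2, z' i = z i) :
    sepTrunc z' j = sepTrunc z j := by
  have hr : roundApprox (pfst z') j = roundApprox (pfst z) j := by
    simp only [roundApprox, pfst, h (2 * (4 * (j + 1))) (by omega)]
  unfold sepTrunc
  rw [hr, psnd, psnd, h _ (by omega)]

lemma sepTrunc_pairB {p s : Baire} {x : ℝ} (hp : rhoCauchy p x)
    (hs1 : ∀ v : ℚ, s (ratCode v) = 1 → (v : ℝ) ≤ x) (hs0 : ∀ v : ℚ, s (ratCode v) ≠ 1 → x ≤ v)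
    (j : ℕ) :
    sepTrunc (pairB p s) j =
      if ∃ v : ℚ, (v : ℝ) = x ∧ s (ratCode v) ≠ 1 then ⌈x * 10 ^ j⌉ - 1 else ⌊x * 10 ^ j⌋ := by
  have hk := abs_lt.mp (hp.abs_mul_pow_sub_roundApprox_lt j)
  rw [sepTrunc, pfst_pairB, psnd_pairB]
  set k := roundApprox p j
  set v : ℚ := k / 10 ^ j
  have hpos : (0 : ℝ) < 10 ^ j := by positivity
  have hv : (v : ℝ) = k / 10 ^ j := by push_cast [v]; rfl
  have hvx : (v : ℝ) = x ↔ x * 10 ^ j = k := by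
    rw [hv, div_eq_iff hpos.ne', eq_comm]
  by_cases hs : s (ratCode v) = 1
  · have hkx : (k : ℝ) ≤ x * 10 ^ j := (div_le_iff₀ hpos).mp (hv ▸ hs1 v hs)
    rw [if_pos hs]
    split_ifs with hdown
    · obtain ⟨u, hux, hu⟩ := hdown
      have hne : x * 10 ^ j ≠ k := fun heq =>
        hu (by rw [Rat.cast_injective (hux.trans (hvx.mpr heq).symm), hs])
      have hceil : ⌈x * 10 ^ j⌉ = k + 1 := by
        rw [Int.ceil_eq_iff]
        push_cast
        exact ⟨by linarith [lt_of_le_of_ne hkx (Ne.symm hne)], by linarith⟩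
      omega
    · exact (Int.floor_eq_iff.mpr ⟨hkx, by linarith⟩).symm
  · have hxk : x * 10 ^ j ≤ k := (le_div_iff₀ hpos).mp (hv ▸ hs0 v hs)
    rw [if_neg hs]
    split_ifs with hdown
    · rw [(Int.ceil_eq_iff.mpr ⟨by linarith, hxk⟩)]
    · have hne : x * 10 ^ j ≠ k := fun heq => hdown ⟨v, hvx.mpr heq, hs⟩
      exact (Int.floor_eq_iff.mpr ⟨by push_cast; linarith, by
        push_cast; linarith [lt_of_le_of_ne hxk hne]⟩).symm

lemma rhoDec_decimalName_sepTrunc {p s : Baire} {x : ℝ} (hp : rhoCauchy p x)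
    (hs1 : ∀ v : ℚ, s (ratCode v) = 1 → (v : ℝ) ≤ x) (hs0 : ∀ v : ℚ, s (ratCode v) ≠ 1 → x ≤ v) :
    rhoDec (decimalName (sepTrunc (pairB p s))) x := by
  have htrunc := funext (sepTrunc_pairB hp hs1 hs0)
  by_cases hdown : ∃ v : ℚ, (v : ℝ) = x ∧ s (ratCode v) ≠ 1
  · simp only [hdown, if_true] at htrunc
    exact htrunc ▸ rhoDec_decimalName_ceil_sub_one x
  · simp only [hdown, if_false] at htrunc
    exact htrunc ▸ rhoDec_decimalName_floor x

lemma continuousOn_decimalName_sepTrunc :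
    ContinuousOn (fun z => decimalName (sepTrunc z)) Set.univ := by
  refine continuousOn_of_finite_prefix fun z _ j => ⟨2 * (4 * (j + 1)) +
    2 * ratCode (roundApprox (pfst z) j / 10 ^ j) + 2 + (2 * (4 * (j - 1 + 1)) +
    2 * ratCode (roundApprox (pfst z) (j - 1) / 10 ^ (j - 1)) + 2), fun z' hz' => ?_⟩
  have hj := sepTrunc_congr (j := j) fun i hi => hz' i (by omega)
  have hj1 := sepTrunc_congr (j := j - 1) fun i hi => hz' i (by omega)
  unfold decimalName
  split_ifs with h0
  · subst h0
    rw [hj]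
  · rw [hj, hj1]

theorem decimalTranslator_wRed_SEP1 : WRed (implProblem rhoCauchy rhoDec) SEP1 := by
  refine ⟨Set.univ, Set.univ, cutInstance, fun z => decimalName (sepTrunc z),
    continuousOn_cutInstance, continuousOn_decimalName_sepTrunc, fun p ⟨x, hx⟩ => ?_⟩
  refine ⟨trivial, cutInstance_mem_dom hx, fun s hs => ⟨trivial, x, hx, ?_⟩⟩
  obtain ⟨hs1, hs0⟩ := separator_cutInstance hx hs
  exact rhoDec_decimalName_sepTrunc hx hs1 hs0

section Settling

variable (p q : Baire)

def Settled (k n : ℕ) : Prop := ∃ i < k, p i = n + 1 ∨ q i = n + 1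

lemma exists_not_settled (k : ℕ) : ∃ n, ¬Settled p q k n := by
  refine ⟨∑ i ∈ Finset.range k, (p i + q i), ?_⟩
  rintro ⟨i, hi, h⟩
  have := Finset.single_le_sum (f := fun i => p i + q i) (fun _ _ => Nat.zero_le _)
    (Finset.mem_range.mpr hi)
  omega

noncomputable def firstUnsettled (k : ℕ) : ℕ := Nat.find (exists_not_settled p q k)

noncomputable def step (k : ℕ) : ℤ :=
  if p k = firstUnsettled p q k + 1 then 1
  else if q k = firstUnsettled p q k + 1 then -1 else 0

noncomputable def sepReal : ℝ := decSum 0 (step p q)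

variable {p q}

lemma firstUnsettled_not_settled (k : ℕ) : ¬Settled p q k (firstUnsettled p q k) :=
  Nat.find_spec (exists_not_settled p q k)

lemma firstUnsettled_le {k n : ℕ} (h : ¬Settled p q k n) : firstUnsettled p q k ≤ n :=
  Nat.find_min' _ h

lemma Settled.mono {k k' n : ℕ} (hk : k ≤ k') (h : Settled p q k n) : Settled p q k' n := by
  obtain ⟨i, hi, h⟩ := h
  exact ⟨i, by omega, h⟩

lemma firstUnsettled_mono : Monotone (firstUnsettled p q) := fun _ k' hk =>
  firstUnsettled_le fun h => firstUnsettled_not_settled k' (h.mono hk)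

lemma abs_step_le (k : ℕ) : |step p q k| ≤ 1 := by
  unfold step
  split_ifs <;> norm_num

lemma exists_settling_stage {j n : ℕ} (hj : firstUnsettled p q j = n)
    (hn : ∃ i, p i = n + 1 ∨ q i = n + 1) :
    ∃ w, j ≤ w ∧ (∀ k, j ≤ k → k < w → step p q k = 0) ∧ firstUnsettled p q w = n ∧
      (p w = n + 1 ∨ q w = n + 1) := by
  have hunsettled : ∀ k ≤ Nat.find hn, ¬Settled p q k n := fun k hk ⟨i, hi, h⟩ =>
    Nat.find_min hn (by omega) h
  have hjw : j ≤ Nat.find hn := by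
    by_contra h
    have hsettled : Settled p q j n := ⟨_, by omega, Nat.find_spec hn⟩
    exact firstUnsettled_not_settled j (hj ▸ hsettled)
  have hfirst : ∀ k, j ≤ k → k ≤ Nat.find hn → firstUnsettled p q k = n := fun k hjk hkw =>
    le_antisymm (firstUnsettled_le (hunsettled k hkw)) (hj ▸ firstUnsettled_mono hjk)
  refine ⟨Nat.find hn, hjw, fun k hjk hkw => ?_, hfirst _ hjw le_rfl, Nat.find_spec hn⟩
  have hk := not_or.mp (Nat.find_min hn hkw)
  simp [step, hfirst k hjk hkw.le, hk.1, hk.2]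

lemma decNum_step_div_pow_lt_sepReal (hdisj : Disjoint (rangeM p) (rangeM q)) {j n : ℕ}
    (hj : firstUnsettled p q j = n) (hn : n ∈ rangeM p) :
    (decNum 0 (step p q) j : ℝ) / 10 ^ j < sepReal p q := by
  obtain ⟨i, hi⟩ := hn
  obtain ⟨w, hjw, hzero, hw, hpq⟩ := exists_settling_stage hj ⟨i, Or.inl hi⟩
  have hpw : p w = n + 1 := hpq.resolve_right fun hq => Set.disjoint_left.mp hdisj ⟨i, hi⟩ ⟨w, hq⟩
  exact decNum_div_pow_lt_decSum abs_step_le hjw hzero (by simp [step, hw, hpw])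

lemma sepReal_lt_decNum_step_div_pow (hdisj : Disjoint (rangeM p) (rangeM q)) {j n : ℕ}
    (hj : firstUnsettled p q j = n) (hn : n ∈ rangeM q) :
    sepReal p q < decNum 0 (step p q) j / 10 ^ j := by
  obtain ⟨i, hi⟩ := hn
  obtain ⟨w, hjw, hzero, hw, hpq⟩ := exists_settling_stage hj ⟨i, Or.inr hi⟩
  have hpw : p w ≠ n + 1 := fun hp => Set.disjoint_left.mp hdisj ⟨w, hp⟩ ⟨i, hi⟩
  have hqw : q w = n + 1 := hpq.resolve_left hpw
  exact decSum_lt_decNum_div_pow abs_step_le hjw hzero (by simp [step, hw, hpw, hqw])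

lemma exists_forall_lt_settled {n : ℕ} (h : ∀ m < n, ∃ i, p i = m + 1 ∨ q i = m + 1) :
    ∃ k, ∀ m < n, Settled p q k m := by
  induction n with
  | zero => exact ⟨0, fun m hm => absurd hm (Nat.not_lt_zero m)⟩
  | succ n ih =>
    obtain ⟨k, hk⟩ := ih fun m hm => h m (by omega)
    obtain ⟨i, hi⟩ := h n n.lt_succ_self
    refine ⟨max k (i + 1), fun m hm => ?_⟩
    rcases Nat.lt_succ_iff_lt_or_eq.mp hm with hm | rfl
    · exact (hk m hm).mono (le_max_left _ _)
    · exact ⟨i, by omega, hi⟩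

variable {p' q' : Baire}

lemma settled_congr {k : ℕ} (hp : ∀ i < k, p' i = p i) (hq : ∀ i < k, q' i = q i) (n : ℕ) :
    Settled p' q' k n ↔ Settled p q k n := by
  unfold Settled
  exact exists_congr fun i => and_congr_right fun hi => by rw [hp i hi, hq i hi]

lemma firstUnsettled_congr {k : ℕ} (hp : ∀ i < k, p' i = p i) (hq : ∀ i < k, q' i = q i) :
    firstUnsettled p' q' k = firstUnsettled p q k :=
  Nat.find_congr' (not_congr (settled_congr hp hq _))

lemma step_congr {k : ℕ} (hp : ∀ i ≤ k, p' i = p i) (hq : ∀ i ≤ k, q' i = q i) :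
    step p' q' k = step p q k := by
  rw [step, step, hp k le_rfl, hq k le_rfl,
    firstUnsettled_congr (fun i hi => hp i hi.le) fun i hi => hq i hi.le]

lemma decNum_step_congr {k : ℕ} (hp : ∀ i < k, p' i = p i) (hq : ∀ i < k, q' i = q i) :
    decNum 0 (step p' q') k = decNum 0 (step p q) k :=
  decNum_congr fun i hi => step_congr (fun l hl => hp l (by omega)) fun l hl => hq l (by omega)

end Settling

noncomputable def sepCauchyName (r : Baire) : Baire :=
  fun m => ratCode ((decNum 0 (step (pfst r) (psnd r)) m : ℚ) / 10 ^ m)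

lemma rhoCauchy_sepCauchyName (r : Baire) :
    rhoCauchy (sepCauchyName r) (sepReal (pfst r) (psnd r)) := by
  intro m
  rw [sepCauchyName, ratEnum_ratCode, zpow_neg, zpow_natCast, abs_sub_comm]
  push_cast
  calc _ ≤ 1 / (9 * 10 ^ m) := abs_decSum_sub_decNum_div_pow_le abs_step_le m
    _ ≤ 1 / 2 ^ m := one_div_le_one_div_of_le (by positivity) <| by
        have : (2 : ℝ) ^ m ≤ 10 ^ m := pow_le_pow_left₀ (by norm_num) (by norm_num) m
        linarith [pow_pos (by norm_num : (0 : ℝ) < 10) m]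
    _ = (2 ^ m)⁻¹ := one_div _

lemma continuousOn_sepCauchyName : ContinuousOn sepCauchyName Set.univ :=
  continuousOn_of_finite_prefix fun r _ m => ⟨2 * m, fun r' hr' => by
    rw [sepCauchyName, sepCauchyName, decNum_step_congr (p := pfst r) (q := psnd r)
      (p' := pfst r') (q' := psnd r') (fun i hi => hr' (2 * i) (by omega))
      fun i hi => hr' (2 * i + 1) (by omega)]⟩

def Resolves (p q : Baire) (n j : ℕ) : Prop :=
  p j = n + 1 ∨ q j = n + 1 ∨ firstUnsettled p q j = n

noncomputable def sepAnswer (p q y : Baire) (n : ℕ) : ℕ :=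
  if h : ∃ j, Resolves p q n j then
    if p (Nat.find h) = n + 1 then 1
    else if q (Nat.find h) = n + 1 then 0
    else if decNum 0 (step p q) (Nat.find h) ≤ decTrunc y (Nat.find h) then 1 else 0
  else 0

section SepAnswer

variable {p q y : Baire} {n : ℕ}

lemma sepAnswer_le_one : sepAnswer p q y n ≤ 1 := by
  unfold sepAnswer
  split_ifs <;> norm_num

lemma sepAnswer_eq_one (hdisj : Disjoint (rangeM p) (rangeM q)) (hy : rhoDec y (sepReal p q))
    (hn : n ∈ rangeM p) : sepAnswer p q y n = 1 := by
  have h : ∃ j, Resolves p q n j := ⟨_, Or.inl hn.choose_spec⟩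
  have hres := Nat.find_spec h
  rw [sepAnswer, dif_pos h]
  set j := Nat.find h
  split_ifs with hp hq hle
  · rfl
  · exact absurd ⟨j, hq⟩ (Set.disjoint_left.mp hdisj hn)
  · rfl
  · have hlt := decNum_step_div_pow_lt_sepReal hdisj ((hres.resolve_left hp).resolve_left hq) hn
    rw [div_lt_iff₀ (by positivity)] at hlt
    have : decNum 0 (step p q) j < decTrunc y j + 1 := by
      exact_mod_cast hlt.trans_le (hy.decTrunc_le j).2
    omega

lemma sepAnswer_eq_zero (hdisj : Disjoint (rangeM p) (rangeM q)) (hy : rhoDec y (sepReal p q))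
    (hn : n ∈ rangeM q) : sepAnswer p q y n = 0 := by
  have h : ∃ j, Resolves p q n j := ⟨_, Or.inr (Or.inl hn.choose_spec)⟩
  have hres := Nat.find_spec h
  rw [sepAnswer, dif_pos h]
  set j := Nat.find h
  split_ifs with hp hq hle
  · exact absurd hn (Set.disjoint_left.mp hdisj ⟨j, hp⟩)
  · rfl
  · have hlt := sepReal_lt_decNum_step_div_pow hdisj ((hres.resolve_left hp).resolve_left hq) hn
    rw [lt_div_iff₀ (by positivity)] at hlt
    have : decTrunc y j < decNum 0 (step p q) j := by
      exact_mod_cast (hy.decTrunc_le j).1.trans_lt hlt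
    omega
  · rfl

lemma sepAnswer_mem_sol {r : Baire} (hr : r ∈ SEP1.dom)
    (hy : rhoDec y (sepReal (pfst r) (psnd r))) :
    sepAnswer (pfst r) (psnd r) y ∈ SEP.sol r := by
  have hdisj := Set.disjoint_iff_inter_eq_empty.mpr hr.1
  refine ⟨{n | sepAnswer (pfst r) (psnd r) y n = 1}, funext fun n => ?_,
    fun n hn => sepAnswer_eq_one hdisj hy hn, fun n hn hq => ?_⟩
  · rcases Nat.le_one_iff_eq_zero_or_eq_one.mp (sepAnswer_le_one (p := pfst r) (q := psnd r)
      (y := y) (n := n)) with h | h <;> simp [chi, h]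
  · rw [Set.mem_ofPred_eq, sepAnswer_eq_zero hdisj hy hq] at hn
    exact zero_ne_one hn

variable {p' q' y' : Baire}

lemma resolves_congr {j : ℕ} (hp : ∀ i ≤ j, p' i = p i) (hq : ∀ i ≤ j, q' i = q i) :
    Resolves p' q' n j ↔ Resolves p q n j := by
  rw [Resolves, Resolves, hp j le_rfl, hq j le_rfl,
    firstUnsettled_congr (fun i hi => hp i hi.le) fun i hi => hq i hi.le]

lemma sepAnswer_congr (h : ∃ j, Resolves p q n j) (hp : ∀ i ≤ Nat.find h, p' i = p i)
    (hq : ∀ i ≤ Nat.find h, q' i = q i) (hy : ∀ i ≤ Nat.find h, y' i = y i) :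
    sepAnswer p' q' y' n = sepAnswer p q y n := by
  have h' : ∃ j, Resolves p' q' n j := ⟨_, (resolves_congr hp hq).mpr (Nat.find_spec h)⟩
  have hfind : Nat.find h' = Nat.find h :=
    (Nat.find_eq_iff h').mpr ⟨(resolves_congr hp hq).mpr (Nat.find_spec h), fun m hm hres =>
      Nat.find_min h hm ((resolves_congr (fun i hi => hp i (by omega))
        fun i hi => hq i (by omega)).mp hres)⟩
  rw [sepAnswer, sepAnswer, dif_pos h', dif_pos h, hfind, hp _ le_rfl, hq _ le_rfl,
    decNum_step_congr (fun i hi => hp i hi.le) (fun i hi => hq i hi.le), decTrunc_congr hy]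

end SepAnswer

lemma exists_resolves {r : Baire} (hr : r ∈ SEP1.dom) (n : ℕ) :
    ∃ j, Resolves (pfst r) (psnd r) n j := by
  by_cases hn : n ∈ rangeM (pfst r) ∪ rangeM (psnd r)
  · rcases hn with ⟨i, hi⟩ | ⟨i, hi⟩
    exacts [⟨i, Or.inl hi⟩, ⟨i, Or.inr (Or.inl hi)⟩]
  have hbelow : ∀ m < n, ∃ i, pfst r i = m + 1 ∨ psnd r i = m + 1 := by
    intro m hm
    by_contra hnone
    have hgap : m ∉ rangeM (pfst r) ∪ rangeM (psnd r) := by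
      rintro (⟨i, hi⟩ | ⟨i, hi⟩) <;> exact hnone ⟨i, by tauto⟩
    exact hm.ne (Set.encard_le_one_iff.mp hr.2 m n hgap hn)
  obtain ⟨k, hk⟩ := exists_forall_lt_settled hbelow
  refine ⟨k, Or.inr (Or.inr (le_antisymm (firstUnsettled_le ?_)
    (not_lt.mp fun hlt => firstUnsettled_not_settled k (hk _ hlt))))⟩
  rintro ⟨i, -, hi⟩
  exact hn (hi.imp (⟨i, ·⟩) (⟨i, ·⟩))

noncomputable def sepSolution (z : Baire) : Baire :=
  sepAnswer (pfst (pfst z)) (psnd (pfst z)) (psnd z)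

lemma continuousOn_sepSolution :
    ContinuousOn sepSolution {z | ∀ n, ∃ j, Resolves (pfst (pfst z)) (psnd (pfst z)) n j} :=
  continuousOn_of_finite_prefix fun z hz n => ⟨4 * Nat.find (hz n) + 3, fun z' hz' =>
    sepAnswer_congr (hz n) (fun i hi => hz' (2 * (2 * i)) (by omega))
      (fun i hi => hz' (2 * (2 * i + 1)) (by omega)) fun i hi => hz' (2 * i + 1) (by omega)⟩

theorem SEP1_wRed_decimalTranslator : WRed SEP1 (implProblem rhoCauchy rhoDec) := by
  refine ⟨Set.univ, _, sepCauchyName, sepSolution, continuousOn_sepCauchyName,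
    continuousOn_sepSolution, fun r hr => ⟨trivial, ⟨_, rhoCauchy_sepCauchyName r⟩, ?_⟩⟩
  rintro y ⟨x, hx, hy⟩
  rw [hx.unique (rhoCauchy_sepCauchyName r)] at hy
  refine ⟨fun n => ?_, ?_⟩ <;> simp only [pfst_pairB, psnd_pairB, sepSolution]
  exacts [exists_resolves hr n, sepAnswer_mem_sol hr hy]

/-- Weihrauch's Theorem 13: `SEP₁ ≡_W (ρ→ρ_10)`. -/
theorem SEP1_equiv_decimal_translator : WEquiv SEP1 (implProblem rhoCauchy rhoDec) :=
  ⟨SEP1_wRed_decimalTranslator, decimalTranslator_wRed_SEP1⟩
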